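/- If a history H' is equivalent to H and ≺_{H'} = ≺_H, then writing H = I_1 R_1 I_2 R_2 ... as maximal alternating blocks of invocations and responses, H' = I'_1 R'_1 I'_2 R'_2 ... where each I'_x is a permutation of I_x and each R'_x is a permutation of R_x. -/

import Mathlib

namespace RV

inductive Event where
  | inv (p : ℕ) (op : ℕ)
  | res (p : ℕ) (op : ℕ)
deriving DecidableEq

abbrev History := List Event

def Event.proc : Event → ℕ
  | .inv p _ => p
  | .res p _ => p

def Event.op : Event → ℕ
  | .inv _ o => o
  | .res _ o => o

def Event.isInv : Event → Bool
  | .inv _ _ => true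
  | .res _ _ => false

/-- The subsequence of events of process `p`. -/
def proj (E : History) (p : ℕ) : History := E.filter (fun e => e.proc == p)

/-- Two histories are equivalent if every process has the same subsequence of events. -/
def Equivalent (E F : History) : Prop := ∀ p, proj E p = proj F p

/-- Operation `a` precedes operation `b` in `E`: the response of `a` occurs
before the invocation of `b`. -/
def prec (E : History) (a b : ℕ) : Prop :=
  ∃ i j p q, i < j ∧ E[(i : ℕ)]? = some (Event.res p a) ∧ E[(j : ℕ)]? = some (Event.inv q b)

/-- A single process' subsequence alternates invocation, matching response, ... ,
possibly ending with a pending invocation. -/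
inductive Alt : History → Prop where
  | nil : Alt []
  | pend (p o : ℕ) : Alt [Event.inv p o]
  | step (p o : ℕ) (l : History) : Alt l → Alt (Event.inv p o :: Event.res p o :: l)

/-- Well-formed history: per-process alternation, and every operation identifier is
invoked at most once and responded at most once. -/
def WellFormed (E : History) : Prop :=
  (∀ p, Alt (proj E p)) ∧
  (∀ o, E.countP (fun e => e.isInv && e.op == o) ≤ 1) ∧
  (∀ o, E.countP (fun e => !e.isInv && e.op == o) ≤ 1)

def CompleteIn (E : History) (o : ℕ) : Prop :=
  (∃ p, Event.inv p o ∈ E) ∧ ∃ q, Event.res q o ∈ E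

def PendingIn (E : History) (o : ℕ) : Prop :=
  (∃ p, Event.inv p o ∈ E) ∧ ∀ q, Event.res q o ∉ E

def hasRes (E : History) (o : ℕ) : Bool := E.any (fun e => !e.isInv && e.op == o)

/-- `comp E` removes the invocations of pending operations. -/
def comp (E : History) : History := E.filter (fun e => !e.isInv || hasRes E e.op)

/-- `E'` extends `E` by appending responses to some pending operations. -/
def IsExtension (E E' : History) : Prop :=
  ∃ rs : History, E' = E ++ rs ∧
    (∀ e ∈ rs, e.isInv = false ∧ PendingIn E e.op ∧ Event.inv e.proc e.op ∈ E) ∧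
    rs.Pairwise (fun a b => a.op ≠ b.op)

/-- Sequential histories: alternating invocation/matching-response pairs. -/
inductive Seq : History → Prop where
  | nil : Seq []
  | step (p o : ℕ) (l : History) : Seq l → Seq (Event.inv p o :: Event.res p o :: l)

/-- `E` is linearizable w.r.t. the sequential object `O` (a set of sequential
histories): there is an extension `E'` of `E` and `S ∈ O` such that `comp E'`
and `S` are equivalent and `<_{comp E'} ⊆ <_S`. -/
def Linearizable (O : Set History) (E : History) : Prop :=
  ∃ E', IsExtension E E' ∧ ∃ S ∈ O, Equivalent (comp E') S ∧
    ∀ a b, prec (comp E') a b → prec S a b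

/-- `E` is similar to `F`: some history `E'`, obtained from `E` by appending
responses to some pending operations and removing the invocations of some other
pending operations, is equivalent to `F` and satisfies `≺_{E'} ⊆ ≺_F`. -/
def Similar (E F : History) : Prop :=
  ∃ (keep : Event → Bool) (rs : History),
    (∀ e ∈ E, keep e = false → e.isInv = true ∧ PendingIn E e.op) ∧
    (∀ e ∈ rs, e.isInv = false ∧ PendingIn E e.op ∧ Event.inv e.proc e.op ∈ E ∧
      keep (Event.inv e.proc e.op) = true) ∧
    rs.Pairwise (fun a b => a.op ≠ b.op) ∧
    Equivalent (E.filter keep ++ rs) F ∧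
    (∀ a b, prec (E.filter keep ++ rs) a b → prec F a b)

/-- The class `GenLin`: sets of well-formed histories closed under prefixes and
under similarity. -/
def GenLin (O : Set History) : Prop :=
  (∀ F ∈ O, ∀ E : History, E <+: F → E ∈ O) ∧
  (∀ F ∈ O, ∀ E : History, Similar E F → E ∈ O)


/-- `bs` is a decomposition into maximal alternating nonempty blocks, starting with
a block of invocations: even-indexed blocks contain only invocations, odd-indexed
blocks only responses. -/
def AltBlocks (bs : List History) : Prop :=
  (∀ b ∈ bs, b ≠ []) ∧
  ∀ k, k < bs.length → ∀ e ∈ bs.getD k [], e.isInv = (k % 2 == 0)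

/-! Since every event occurs once and `≺` records exactly which responses come before which
invocations, `H` and `H'` order every response–invocation pair in the same way. Hence in `H'`
an event of block `i` still comes before every event of a later block `j`: directly when the two
events are of different kinds, and through any event of block `i + 1` otherwise. A permutation
of `H` that keeps the blocks in order is a concatenation of permutations of the blocks. -/

end RV

namespace List

variable {α : Type*}

theorem pair_sublist_iff_getElem? {l : List α} {a b : α} :
    [a, b] <+ l ↔ ∃ i j : ℕ, i < j ∧ l[i]? = some a ∧ l[j]? = some b := by
  constructor
  · intro h
    obtain ⟨is, his, hlt⟩ := sublist_eq_map_getElem h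
    rcases is with _ | ⟨i, _ | ⟨j, _ | _⟩⟩ <;> simp at his
    obtain ⟨rfl, rfl⟩ := his
    exact ⟨i, j, by simpa using hlt, by simp, by simp⟩
  · rintro ⟨i, j, hij, hi, hj⟩
    obtain ⟨hi', rfl⟩ := getElem?_eq_some_iff.1 hi
    obtain ⟨hj', rfl⟩ := getElem?_eq_some_iff.1 hj
    simpa using
      map_getElem_sublist (l := l) (is := [⟨i, hi'⟩, ⟨j, hj'⟩]) (by simpa using hij)

theorem eq_of_mem_of_countP_le_one {p : α → Bool} {l : List α} (h : l.countP p ≤ 1) {a b : α}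
    (ha : a ∈ l) (hb : b ∈ l) (hpa : p a) (hpb : p b) : a = b := by
  by_contra hne
  obtain ⟨l', hl', hsub⟩ := (show [a, b].Nodup by simpa using hne).subperm (l₂ := l)
    (by simp [subset_def, ha, hb])
  have := hl'.countP_eq p ▸ hsub.countP_le (p := p)
  simp [hpa, hpb] at this
  omega

theorem eq_filter_append_filter_not {p : α → Bool} {l : List α}
    (h : l.Pairwise fun a b => p b → p a) : l = l.filter p ++ l.filter (fun a => !p a) := by
  induction l with
  | nil => rfl
  | cons a l ih =>
    rw [pairwise_cons] at h
    by_cases ha : p a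
    · simp [ha, ← ih h.2]
    · have hl : ∀ b ∈ l, p b = false := fun b hb => by simpa [ha] using mt (h.1 b hb)
      have hl' : l.filter (fun a => !p a) = l := filter_eq_self.2 fun b hb => by simp [hl b hb]
      simp [ha, filter_eq_nil_iff.2 (by simpa using hl), hl']

theorem mem_flatten_iff_exists_mem_getD {L : List (List α)} {a : α} :
    a ∈ L.flatten ↔ ∃ k, a ∈ L.getD k [] := by
  rw [mem_flatten]
  constructor
  · rintro ⟨l, hl, ha⟩
    obtain ⟨k, hk, rfl⟩ := getElem_of_mem hl
    exact ⟨k, by rwa [getD_eq_getElem _ _ hk]⟩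
  · rintro ⟨k, ha⟩
    rw [getD_eq_getElem?_getD] at ha
    cases hk : L[k]? with
    | none => simp [hk] at ha
    | some l => exact ⟨l, mem_of_getElem? hk, by simpa [hk] using ha⟩

theorem lt_length_of_mem_getD {L : List (List α)} {k : ℕ} {a : α} (ha : a ∈ L.getD k []) :
    k < L.length := by
  by_contra hk
  rw [getD_eq_default _ _ (not_lt.1 hk)] at ha
  exact not_mem_nil ha

theorem pair_sublist_flatten_of_lt {L : List (List α)} {i j : ℕ} {a b : α} (hij : i < j)
    (ha : a ∈ L.getD i []) (hb : b ∈ L.getD j []) : [a, b] <+ L.flatten := by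
  induction L generalizing i j with
  | nil => simp at ha
  | cons l L ih =>
    obtain ⟨j, rfl⟩ : ∃ j', j = j' + 1 := ⟨j - 1, by omega⟩
    rw [getD_cons_succ] at hb
    cases i with
    | zero =>
      rw [getD_cons_zero] at ha
      exact (singleton_sublist.2 ha).append
        (singleton_sublist.2 (mem_flatten_iff_exists_mem_getD.2 ⟨j, hb⟩))
    | succ i =>
      rw [getD_cons_succ] at ha
      exact (ih (by omega) ha hb).trans (sublist_append_right _ _)

section DecidableEq

variable [DecidableEq α] {l : List α} {a b c : α}

theorem Nodup.pair_sublist_iff_idxOf_lt (hl : l.Nodup) :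
    [a, b] <+ l ↔ a ∈ l ∧ b ∈ l ∧ l.idxOf a < l.idxOf b := by
  rw [pair_sublist_iff_getElem?]
  constructor
  · rintro ⟨i, j, hij, hi, hj⟩
    obtain ⟨hi', rfl⟩ := getElem?_eq_some_iff.1 hi
    obtain ⟨hj', rfl⟩ := getElem?_eq_some_iff.1 hj
    simpa [hl.idxOf_getElem] using hij
  · rintro ⟨ha, hb, hab⟩
    exact ⟨_, _, hab, getElem?_eq_some_iff.2 ⟨idxOf_lt_length_of_mem ha, getElem_idxOf _⟩,
      getElem?_eq_some_iff.2 ⟨idxOf_lt_length_of_mem hb, getElem_idxOf _⟩⟩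

theorem Nodup.pair_sublist_trans (hl : l.Nodup) (hab : [a, b] <+ l) (hbc : [b, c] <+ l) :
    [a, c] <+ l := by
  rw [hl.pair_sublist_iff_idxOf_lt] at *
  exact ⟨hab.1, hbc.2.1, hab.2.2.trans hbc.2.2⟩

theorem Nodup.not_pair_sublist_swap (hl : l.Nodup) (hab : [a, b] <+ l) : ¬[b, a] <+ l := by
  rw [hl.pair_sublist_iff_idxOf_lt] at *
  omega

theorem Nodup.pair_sublist_iff_not_swap (hl : l.Nodup) (hab : a ≠ b) :
    [a, b] <+ l ↔ a ∈ l ∧ b ∈ l ∧ ¬[b, a] <+ l := by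
  simp only [hl.pair_sublist_iff_idxOf_lt]
  constructor
  · rintro ⟨ha, hb, hlt⟩
    exact ⟨ha, hb, by omega⟩
  · rintro ⟨ha, hb, hnlt⟩
    have : l.idxOf a ≠ l.idxOf b := fun h => hab ((idxOf_inj ha).1 h)
    exact ⟨ha, hb, by simp only [ha, hb, true_and, not_lt] at hnlt; omega⟩

theorem filter_perm_of_perm_append {l₁ l₂ : List α} (hperm : l ~ l₁ ++ l₂)
    (hdisj : Disjoint l₁ l₂) :
    l.filter (· ∈ l₁) ~ l₁ ∧ l.filter (fun a => !decide (a ∈ l₁)) ~ l₂ := by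
  constructor
  · have := hperm.filter (· ∈ l₁)
    rwa [filter_append, (filter_eq_self (l := l₁)).2 (fun a ha => by simpa using ha),
      (filter_eq_nil_iff (l := l₂)).2 (fun a ha h => hdisj (by simpa using h) ha),
      append_nil] at this
  · have := hperm.filter (fun a => !decide (a ∈ l₁))
    rwa [filter_append, (filter_eq_nil_iff (l := l₁)).2 (fun a ha => by simpa using ha),
      nil_append, (filter_eq_self (l := l₂)).2 (fun a ha => by simpa using fun h => hdisj h ha)]
      at this

theorem exists_flatten_eq_of_perm_flatten {L : List (List α)} (hperm : l ~ L.flatten)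
    (hnd : L.flatten.Nodup)
    (hord : ∀ i j, i < j → ∀ a ∈ L.getD i [], ∀ b ∈ L.getD j [], [a, b] <+ l) :
    ∃ L' : List (List α), l = L'.flatten ∧ L'.length = L.length ∧
      ∀ k, (L'.getD k []).Perm (L.getD k []) := by
  induction L generalizing l with
  | nil => exact ⟨[], by simpa using hperm, rfl, by simp⟩
  | cons b L ih =>
    rw [flatten_cons] at hperm hnd
    have hl : l.Nodup := hperm.nodup_iff.2 hnd
    have hdisj := disjoint_of_nodup_append hnd
    obtain ⟨hfront, hback⟩ := filter_perm_of_perm_append hperm hdisj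
    have hsplit : l = l.filter (· ∈ b) ++ l.filter (fun a => !decide (a ∈ b)) := by
      refine eq_filter_append_filter_not (pairwise_iff_forall_sublist.2 fun {a c} hac hc => ?_)
      by_contra ha
      have ha' : a ∈ L.flatten :=
        (mem_append.1 (hperm.subset (hac.subset mem_cons_self))).resolve_left (by simpa using ha)
      obtain ⟨j, hj⟩ := mem_flatten_iff_exists_mem_getD.1 ha'
      exact hl.not_pair_sublist_swap hac
        (hord 0 (j + 1) (by omega) c (by simpa using hc) a (by simpa using hj))
    have hord' : ∀ i j, i < j → ∀ a ∈ L.getD i [], ∀ c ∈ L.getD j [],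
        [a, c] <+ l.filter (fun a => !decide (a ∈ b)) := by
      intro i j hij a ha c hc
      have := (hord (i + 1) (j + 1) (by omega) a ha c hc).filter (fun a => !decide (a ∈ b))
      rwa [filter_eq_self.2] at this
      simpa using ⟨fun h => hdisj h (mem_flatten_iff_exists_mem_getD.2 ⟨i, ha⟩),
        fun h => hdisj h (mem_flatten_iff_exists_mem_getD.2 ⟨j, hc⟩)⟩
    obtain ⟨L', hL', hlen, hperms⟩ := ih hback (nodup_append.1 hnd).2.1 hord'
    refine ⟨l.filter (· ∈ b) :: L', by rw [flatten_cons, ← hL', ← hsplit], by simp [hlen],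
      ?_⟩
    rintro (_ | k)
    · simpa using hfront
    · simpa using hperms k

end DecidableEq

end List

namespace RV

open List

theorem Equivalent.perm {E F : History} (h : Equivalent E F) : E ~ F := by
  rw [perm_iff_count]
  intro e
  simpa [proj] using congrArg (count e) (h e.proc)

theorem prec_iff_exists_pair_sublist {E : History} {a b : ℕ} :
    prec E a b ↔ ∃ p q, [Event.res p a, Event.inv q b] <+ E := by
  simp only [prec, pair_sublist_iff_getElem?]
  constructor
  · rintro ⟨i, j, p, q, h⟩
    exact ⟨p, q, i, j, h⟩
  · rintro ⟨p, q, i, j, h⟩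
    exact ⟨i, j, p, q, h⟩

namespace WellFormed

theorem nodup {E : History} (hE : WellFormed E) : E.Nodup := by
  refine nodup_iff_count.2 fun e => ?_
  rw [count_eq_countP]
  cases e with
  | inv p o =>
    refine (countP_mono_left fun x _ hx => ?_).trans (hE.2.1 o)
    simp_all [Event.isInv, Event.op]
  | res p o =>
    refine (countP_mono_left fun x _ hx => ?_).trans (hE.2.2 o)
    simp_all [Event.isInv, Event.op]

theorem res_inv_sublist_iff {E : History} (hE : WellFormed E) {p q a b : ℕ} :
    [Event.res p a, Event.inv q b] <+ E ↔
      Event.res p a ∈ E ∧ Event.inv q b ∈ E ∧ prec E a b := by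
  rw [prec_iff_exists_pair_sublist]
  constructor
  · intro h
    exact ⟨h.subset mem_cons_self, h.subset (mem_cons_of_mem _ mem_cons_self), p, q, h⟩
  · rintro ⟨hr, hi, p', q', h⟩
    obtain ⟨⟩ := eq_of_mem_of_countP_le_one (hE.2.2 a) hr (h.subset mem_cons_self)
      (by simp [Event.isInv, Event.op]) (by simp [Event.isInv, Event.op])
    obtain ⟨⟩ := eq_of_mem_of_countP_le_one (hE.2.1 b) hi
      (h.subset (mem_cons_of_mem _ mem_cons_self))
      (by simp [Event.isInv, Event.op]) (by simp [Event.isInv, Event.op])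
    exact h

end WellFormed

theorem pair_sublist_iff_of_isInv_ne {E F : History} (hE : WellFormed E) (hF : WellFormed F)
    (hperm : E ~ F) (hprec : ∀ a b, prec E a b ↔ prec F a b) {x y : Event}
    (hxy : x.isInv ≠ y.isInv) : [x, y] <+ E ↔ [x, y] <+ F := by
  have res_inv : ∀ p a q b, [Event.res p a, Event.inv q b] <+ E ↔
      [Event.res p a, Event.inv q b] <+ F := fun p a q b => by
    rw [hE.res_inv_sublist_iff, hF.res_inv_sublist_iff, hperm.mem_iff, hperm.mem_iff, hprec]
  cases x <;> cases y <;> simp only [Event.isInv, ne_eq, not_true_eq_false] at hxy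
  · rw [hE.nodup.pair_sublist_iff_not_swap (by simp),
      hF.nodup.pair_sublist_iff_not_swap (by simp), res_inv, hperm.mem_iff, hperm.mem_iff]
  · exact res_inv ..

theorem AltBlocks.isInv_eq {bs : List History} (hbs : AltBlocks bs) {k : ℕ} {e : Event}
    (he : e ∈ bs.getD k []) : e.isInv = decide (k % 2 = 0) := by
  rw [hbs.2 k (lt_length_of_mem_getD he) e he, Bool.beq_eq_decide_eq]

theorem AltBlocks.pair_sublist_of_lt {bs : List History} {F : History} (hbs : AltBlocks bs)
    (hF : F.Nodup)
    (hmix : ∀ x y : Event, x.isInv ≠ y.isInv → [x, y] <+ bs.flatten → [x, y] <+ F)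
    {i j : ℕ} (hij : i < j) {x y : Event} (hx : x ∈ bs.getD i []) (hy : y ∈ bs.getD j []) :
    [x, y] <+ F := by
  by_cases hxy : x.isInv = y.isInv
  · have hj := lt_length_of_mem_getD hy
    obtain ⟨r, hr⟩ := exists_mem_of_ne_nil _
      (hbs.1 _ (getD_eq_getElem _ _ (show i + 1 < bs.length by omega) ▸ getElem_mem _))
    rw [hbs.isInv_eq hx, hbs.isInv_eq hy, decide_eq_decide] at hxy
    have hxr : x.isInv ≠ r.isInv := by
      rw [hbs.isInv_eq hx, hbs.isInv_eq hr, ne_eq, decide_eq_decide]; omega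
    have hry : r.isInv ≠ y.isInv := by
      rw [hbs.isInv_eq hr, hbs.isInv_eq hy, ne_eq, decide_eq_decide]; omega
    have hj' : i + 1 < j := by omega
    exact hF.pair_sublist_trans (hmix x r hxr (pair_sublist_flatten_of_lt (by omega) hx hr))
      (hmix r y hry (pair_sublist_flatten_of_lt hj' hr hy))
  · exact hmix x y hxy (pair_sublist_flatten_of_lt hij hx hy)

theorem AltBlocks.of_perm {bs bs' : List History} (hbs : AltBlocks bs)
    (hlen : bs'.length = bs.length) (hperm : ∀ k, (bs'.getD k []).Perm (bs.getD k [])) :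
    AltBlocks bs' := by
  refine ⟨fun b hb hnil => ?_, fun k hk e he => hbs.2 k (hlen ▸ hk) e ((hperm k).subset he)⟩
  obtain ⟨k, hk, rfl⟩ := getElem_of_mem hb
  have := hperm k
  rw [getD_eq_getElem _ _ hk, hnil, getD_eq_getElem _ _ (hlen ▸ hk)] at this
  exact hbs.1 _ (getElem_mem _) this.nil_eq.symm

/-- If `H'` is equivalent to `H` with `≺_{H'} = ≺_H`, and
`H = I₁ R₁ I₂ R₂ ...` is the maximal alternating block decomposition, then
`H' = I'₁ R'₁ I'₂ R'₂ ...` where each `I'ₓ` (resp. `R'ₓ`) is a permutation of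
`Iₓ` (resp. `Rₓ`). -/
theorem block_decomposition_permutation (H H' : History) (bs : List History)
    (hwf : WellFormed H) (hwf' : WellFormed H')
    (heq : Equivalent H H') (hprec : ∀ a b, prec H a b ↔ prec H' a b)
    (hbs : AltBlocks bs) (hjoin : H = bs.flatten) :
    ∃ bs' : List History, H' = bs'.flatten ∧ bs'.length = bs.length ∧
      AltBlocks bs' ∧ ∀ k, (bs'.getD k []).Perm (bs.getD k []) := by
  subst hjoin
  have hmix : ∀ x y : Event, x.isInv ≠ y.isInv → [x, y] <+ bs.flatten → [x, y] <+ H' :=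
    fun x y hxy => (pair_sublist_iff_of_isInv_ne hwf hwf' heq.perm hprec hxy).1
  obtain ⟨bs', hH', hlen, hperm⟩ :=
    exists_flatten_eq_of_perm_flatten heq.perm.symm hwf.nodup
      fun i j hij x hx y hy => hbs.pair_sublist_of_lt hwf'.nodup hmix hij hx hy
  exact ⟨bs', hH', hlen, hbs.of_perm hlen hperm, hperm⟩

end RV
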